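/- arXiv:1310.1958 — 5 statements merged into one kernel-verified Lean document; each statement's English description precedes it below -/
import Mathlib

section
/- If $k$ is even, then for every $\alpha \in L$ one has $\sum_{j=0}^{k-1} j\,\langle \nu^j\alpha, \alpha\rangle \equiv \frac{k}{2}\,\langle \nu^{k/2}\alpha, \alpha\rangle \pmod k$. -/
/-!
Write `c j = ⟨ν^j α, α⟩`. Since `ν` is an isometry of period `k` and the form is symmetric,
`c (k - j) = c j`. Splitting `∑_{j<2m} j c_j` into halves and reflecting the upper half turns it
into `2m ∑_{j<m} c_{j+1}` plus the telescoping sum `∑_{j<m} (j c_j - (j+1) c_{j+1}) = -m c_m`,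
and `-m c_m ≡ m c_m` modulo `2m`.
-/

open Finset

theorem LinearMap.IsOrthogonal.iterate {R M : Type*} [CommRing R] [AddCommGroup M]
    [Module R M] {B : LinearMap.BilinForm R M} {f : M → M} (hf : B.IsOrthogonal f) (n : ℕ) :
    B.IsOrthogonal f^[n] := by
  induction n with
  | zero => exact fun _ _ ↦ rfl
  | succ n ih => exact fun x y ↦ by rw [Function.iterate_succ_apply, Function.iterate_succ_apply,
      ih, hf]

theorem LinearMap.IsOrthogonal.apply_iterate_sub_self {R M : Type*} [CommRing R]
    [AddCommGroup M] [Module R M] {B : LinearMap.BilinForm R M} (hB : B.IsSymm) {f : M → M}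
    (hf : B.IsOrthogonal f) {k : ℕ} {x : M} (hx : Function.IsPeriodicPt f k x) {j : ℕ}
    (hj : j ≤ k) :
    B (f^[k - j] x) x = B (f^[j] x) x := by
  have hback : f^[j] (f^[k - j] x) = x := by
    rw [← Function.iterate_add_apply, Nat.add_sub_cancel' hj, hx.eq]
  rw [← hf.iterate j, hback, hB.eq]

theorem sum_range_two_mul_mul_of_symm (m : ℕ) (c : ℕ → ℤ)
    (hc : ∀ j ≤ 2 * m, c (2 * m - j) = c j) :
    ∑ j ∈ range (2 * m), (j : ℤ) * c j =
      2 * m * ∑ j ∈ range m, c (j + 1) - m * c m := by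
  have hupper : ∑ j ∈ range m, ((m + j : ℕ) : ℤ) * c (m + j) =
      ∑ j ∈ range m, (2 * m - (j + 1) : ℤ) * c (j + 1) := by
    rw [← sum_range_reflect]
    refine sum_congr rfl fun j hj ↦ ?_
    have hj : j < m := mem_range.mp hj
    rw [show m + (m - 1 - j) = 2 * m - (j + 1) by omega, hc _ (by omega)]
    push_cast [Nat.cast_sub (show j + 1 ≤ 2 * m by omega)]
    ring
  have htelescope := sum_range_sub' (fun j ↦ (j : ℤ) * c j) m
  simp only [Nat.cast_add, Nat.cast_one, Nat.cast_zero, zero_mul] at htelescope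
  calc ∑ j ∈ range (2 * m), (j : ℤ) * c j
      = ∑ j ∈ range m, (2 * m * c (j + 1) + ((j : ℤ) * c j - (j + 1) * c (j + 1))) := by
        rw [two_mul, sum_range_add, hupper, ← sum_add_distrib]
        exact sum_congr rfl fun j _ ↦ by ring
    _ = 2 * m * ∑ j ∈ range m, c (j + 1) - m * c m := by
        rw [sum_add_distrib, htelescope, mul_sum]
        ring

theorem sum_range_mul_modEq_of_symm {k : ℕ} (hk : Even k) (c : ℕ → ℤ)
    (hc : ∀ j ≤ k, c (k - j) = c j) :
    ∑ j ∈ range k, (j : ℤ) * c j ≡ ((k / 2 : ℕ) : ℤ) * c (k / 2) [ZMOD k] := by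
  obtain ⟨m, rfl⟩ := hk
  rw [← two_mul] at hc ⊢
  rw [Nat.mul_div_cancel_left m two_pos, sum_range_two_mul_mul_of_symm m c hc,
    Int.modEq_iff_dvd]
  exact ⟨c m - ∑ j ∈ range m, c (j + 1), by push_cast; ring⟩

theorem stmt_3_general (L : Type*) [AddCommGroup L] [Module ℤ L]
    (B : L →ₗ[ℤ] L →ₗ[ℤ] ℤ) (hsymm : ∀ a b : L, B a b = B b a)
    (k : ℕ)
    (ν : L ≃ₗ[ℤ] L) (hiso : ∀ a b : L, B (ν a) (ν b) = B a b)
    (hper : ν ^ k = 1)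
    (hkeven : Even k) (α : L) :
    (∑ j ∈ Finset.range k, (j : ℤ) * B ((ν ^ j) α) α) ≡
      ((k / 2 : ℕ) : ℤ) * B ((ν ^ (k / 2)) α) α [ZMOD (k : ℤ)] := by
  have hperiodic : Function.IsPeriodicPt ν k α := by
    rw [Function.IsPeriodicPt, Function.IsFixedPt, ← LinearEquiv.pow_apply, hper]
    rfl
  have hc (j : ℕ) (hj : j ≤ k) : B ((ν ^ (k - j)) α) α = B ((ν ^ j) α) α := by
    simp only [LinearEquiv.pow_apply]
    exact LinearMap.IsOrthogonal.apply_iterate_sub_self ⟨hsymm⟩ hiso hperiodic hj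
  exact sum_range_mul_modEq_of_symm hkeven (fun j ↦ B ((ν ^ j) α) α) hc

theorem stmt_3 (L : Type*) [AddCommGroup L] [Module ℤ L]
    [Module.Free ℤ L] [Module.Finite ℤ L]
    (B : L →ₗ[ℤ] L →ₗ[ℤ] ℤ) (hsymm : ∀ a b : L, B a b = B b a)
    (k : ℕ) (hk : 0 < k)
    (ν : L ≃ₗ[ℤ] L) (hiso : ∀ a b : L, B (ν a) (ν b) = B a b)
    (hper : ν ^ k = 1)
    (hkeven : Even k) (α : L) :
    (∑ j ∈ Finset.range k, (j : ℤ) * B ((ν ^ j) α) α) ≡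
      ((k / 2 : ℕ) : ℤ) * B ((ν ^ (k / 2)) α) α [ZMOD (k : ℤ)] :=
  stmt_3_general L B hsymm k ν hiso hper hkeven α
end

section
/- If $\alpha, \beta \in L$ satisfy $\alpha - \nu\alpha = \beta - \nu\beta$, then $k\langle\alpha,\alpha\rangle - \sum_{j=0}^{k-1}\langle\nu^j\alpha,\alpha\rangle = k\langle\beta,\beta\rangle - \sum_{j=0}^{k-1}\langle\nu^j\beta,\beta\rangle$. -/
/-! Put `γ = β - α`; the hypothesis says exactly that `ν` fixes `γ`. Since each `ν ^ j` is an
isometry fixing `γ`, the cross terms `B (ν ^ j α) γ` all equal `B α γ`, so replacing `α` by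
`α + γ` changes both `k * B α α` and the sum `∑ j < k, B (ν ^ j α) α` by the same amount
`k * (B α γ + B γ α + B γ γ)`. -/

theorem LinearEquiv.pow_apply_of_apply_eq_self {R M : Type*} [Semiring R] [AddCommMonoid M]
    [Module R M] {ν : M ≃ₗ[R] M} {γ : M} (hγ : ν γ = γ) (j : ℕ) : (ν ^ j) γ = γ := by
  rw [LinearEquiv.coe_pow]
  exact Function.IsFixedPt.iterate hγ j

namespace LinearMap

variable {R M : Type*} [CommRing R] [AddCommGroup M] [Module R M]
  (B : M →ₗ[R] M →ₗ[R] R) {ν : M ≃ₗ[R] M}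

theorem apply_pow_apply_pow_of_isometry (hiso : ∀ a b, B (ν a) (ν b) = B a b) (j : ℕ)
    (a b : M) : B ((ν ^ j) a) ((ν ^ j) b) = B a b := by
  induction j generalizing a b with
  | zero => rfl
  | succ j ih => rw [pow_succ, LinearEquiv.mul_apply, LinearEquiv.mul_apply, ih, hiso]

theorem apply_pow_apply_of_isometry_of_fixed (hiso : ∀ a b, B (ν a) (ν b) = B a b)
    {γ : M} (hγ : ν γ = γ) (j : ℕ) (a : M) : B ((ν ^ j) a) γ = B a γ := by
  rw [← apply_pow_apply_pow_of_isometry B hiso j a γ, ν.pow_apply_of_apply_eq_self hγ]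

theorem natCast_mul_apply_sub_sum_pow_apply_add_of_fixed (hiso : ∀ a b, B (ν a) (ν b) = B a b)
    (k : ℕ) (x : M) {γ : M} (hγ : ν γ = γ) :
    (k : R) * B (x + γ) (x + γ) - ∑ j ∈ Finset.range k, B ((ν ^ j) (x + γ)) (x + γ) =
      (k : R) * B x x - ∑ j ∈ Finset.range k, B ((ν ^ j) x) x := by
  have hterm (j : ℕ) : B ((ν ^ j) (x + γ)) (x + γ) =
      B ((ν ^ j) x) x + (B x γ + B γ x + B γ γ) := by
    simp only [map_add, LinearMap.add_apply, ν.pow_apply_of_apply_eq_self hγ,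
      apply_pow_apply_of_isometry_of_fixed B hiso hγ]
    ring
  rw [Finset.sum_congr rfl fun j _ => hterm j]
  simp only [Finset.sum_add_distrib, Finset.sum_const, Finset.card_range, nsmul_eq_mul,
    map_add, LinearMap.add_apply]
  ring

end LinearMap

theorem stmt_10_general (L : Type*) [AddCommGroup L] [Module ℤ L]
    (B : L →ₗ[ℤ] L →ₗ[ℤ] ℤ)
    (k : ℕ)
    (ν : L ≃ₗ[ℤ] L) (hiso : ∀ a b : L, B (ν a) (ν b) = B a b)
    (α β : L) (h : α - ν α = β - ν β) :
    (k : ℤ) * B α α - ∑ j ∈ Finset.range k, B ((ν ^ j) α) α =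
      (k : ℤ) * B β β - ∑ j ∈ Finset.range k, B ((ν ^ j) β) β := by
  have hfixed : ν (β - α) = β - α := by
    rw [map_sub, sub_eq_sub_iff_add_eq_add, add_comm, ← sub_eq_sub_iff_add_eq_add, h]
  rw [← add_sub_cancel α β]
  exact (LinearMap.natCast_mul_apply_sub_sum_pow_apply_add_of_fixed B hiso k α hfixed).symm

theorem stmt_10 (L : Type*) [AddCommGroup L] [Module ℤ L]
    [Module.Free ℤ L] [Module.Finite ℤ L]
    (B : L →ₗ[ℤ] L →ₗ[ℤ] ℤ) (hsymm : ∀ a b : L, B a b = B b a)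
    (k : ℕ) (hk : 0 < k)
    (ν : L ≃ₗ[ℤ] L) (hiso : ∀ a b : L, B (ν a) (ν b) = B a b)
    (hper : ν ^ k = 1)
    (α β : L) (h : α - ν α = β - ν β) :
    (k : ℤ) * B α α - ∑ j ∈ Finset.range k, B ((ν ^ j) α) α =
      (k : ℤ) * B β β - ∑ j ∈ Finset.range k, B ((ν ^ j) β) β :=
  stmt_10_general L B k ν hiso α β h
end

section
/- Suppose that either $k$ is odd, or $k$ is even and $\langle\nu^{k/2}\gamma,\gamma\rangle \equiv \langle\gamma,\gamma\rangle \pmod 2$ for all $\gamma \in L$. Then for every $\alpha \in L$ the integer $k\langle\alpha,\alpha\rangle - \sum_{j=0}^{k-1}\langle\nu^j\alpha,\alpha\rangle$ is even. -/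
/-!
Write `c j = ⟨ν^j α, α⟩`. The sum in question is `∑_{j<k} (c 0 - c j)`. Since `ν` is an isometry
of period `k` and the form is symmetric, `c (k - j) = c j`, so the terms for `j` and `k - j`
cancel modulo `2`. The term `j = 0` vanishes, and when `k` is even the self-paired term
`j = k / 2` is even by hypothesis.
-/

open Finset

theorem CharTwo.sum_Ico_eq_zero_of_reflect {R : Type*} [Ring R] [CharP R 2] {k : ℕ}
    {f : ℕ → R} (hrefl : ∀ j ∈ Ico 1 k, f (k - j) = f j) (hmid : ∀ j, 2 * j = k → f j = 0) :
    ∑ j ∈ Ico 1 k, f j = 0 :=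
  sum_involution (fun j _ => k - j)
    (fun j hj => by rw [hrefl j hj, CharTwo.add_self_eq_zero])
    (fun j hj hfj hfix => hfj (hmid j (by grind)))
    (fun j hj => by grind)
    (fun j hj => by grind)

theorem Int.even_sum_range_of_reflect {k : ℕ} {f : ℕ → ℤ} (h0 : Even (f 0))
    (hrefl : ∀ j ∈ Ico 1 k, f (k - j) = f j) (hmid : ∀ j, 2 * j = k → Even (f j)) :
    Even (∑ j ∈ Finset.range k, f j) := by
  rcases Nat.eq_zero_or_pos k with rfl | hk
  · simp
  rw [sum_range_eq_add_Ico f hk]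
  refine h0.add ?_
  rw [← ZMod.intCast_eq_zero_iff_even, Int.cast_sum]
  exact CharTwo.sum_Ico_eq_zero_of_reflect (fun j hj => congrArg _ (hrefl j hj))
    (fun j hj => ZMod.intCast_eq_zero_iff_even.mpr (hmid j hj))

namespace LinearMap.IsOrthogonal

variable {R M : Type*} [CommRing R] [AddCommGroup M] [Module R M]
  {B : LinearMap.BilinForm R M} {ν : M ≃ₗ[R] M}

theorem linearEquiv_pow (hν : B.IsOrthogonal ν) (n : ℕ) : B.IsOrthogonal ⇑(ν ^ n) := by
  induction n with
  | zero => exact fun x y => rfl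
  | succ n ih => exact fun x y => (ih (ν x) (ν y)).trans (hν x y)

theorem apply_symm (hν : B.IsOrthogonal ν) (x y : M) : B (ν.symm x) y = B x (ν y) := by
  simpa using (hν (ν.symm x) y).symm

theorem apply_pow_sub_apply_self (hsymm : ∀ x y, B x y = B y x) (hν : B.IsOrthogonal ν)
    {k j : ℕ} (hper : ν ^ k = 1) (hj : j ≤ k) (x : M) :
    B ((ν ^ (k - j)) x) x = B ((ν ^ j) x) x := by
  rw [pow_sub ν hj, hper, one_mul]
  exact ((hν.linearEquiv_pow j).apply_symm x x).trans (hsymm _ _)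

end LinearMap.IsOrthogonal

theorem stmt_12_general (L : Type*) [AddCommGroup L] [Module ℤ L]
    (B : L →ₗ[ℤ] L →ₗ[ℤ] ℤ) (hsymm : ∀ a b : L, B a b = B b a)
    (k : ℕ)
    (ν : L ≃ₗ[ℤ] L) (hiso : ∀ a b : L, B (ν a) (ν b) = B a b)
    (hper : ν ^ k = 1)
    (h : Odd k ∨ (Even k ∧ ∀ γ : L, B ((ν ^ (k / 2)) γ) γ ≡ B γ γ [ZMOD 2])) :
    ∀ α : L, Even ((k : ℤ) * B α α - ∑ j ∈ Finset.range k, B ((ν ^ j) α) α) := by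
  intro α
  have hsum : (k : ℤ) * B α α - ∑ j ∈ range k, B ((ν ^ j) α) α =
      ∑ j ∈ range k, (B α α - B ((ν ^ j) α) α) := by
    simp [sum_sub_distrib]
  rw [hsum]
  refine Int.even_sum_range_of_reflect (by simp) (fun j hj => ?_) (fun j hj => ?_)
  · rw [LinearMap.IsOrthogonal.apply_pow_sub_apply_self hsymm hiso hper
      (mem_Ico.mp hj).2.le]
  · obtain hodd | ⟨-, hmid⟩ := h
    · exact absurd ⟨j, by omega⟩ (Nat.not_even_iff_odd.mpr hodd)
    · rw [← hj, Nat.mul_div_cancel_left j two_pos] at hmid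
      exact even_iff_two_dvd.mpr (hmid α).dvd

theorem stmt_12 (L : Type*) [AddCommGroup L] [Module ℤ L]
    [Module.Free ℤ L] [Module.Finite ℤ L]
    (B : L →ₗ[ℤ] L →ₗ[ℤ] ℤ) (hsymm : ∀ a b : L, B a b = B b a)
    (k : ℕ) (hk : 0 < k)
    (ν : L ≃ₗ[ℤ] L) (hiso : ∀ a b : L, B (ν a) (ν b) = B a b)
    (hper : ν ^ k = 1)
    (h : Odd k ∨ (Even k ∧ ∀ γ : L, B ((ν ^ (k / 2)) γ) γ ≡ B γ γ [ZMOD 2])) :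
    ∀ α : L, Even ((k : ℤ) * B α α - ∑ j ∈ Finset.range k, B ((ν ^ j) α) α) :=
  stmt_12_general L B hsymm k ν hiso hper h
end

section
/- For all $\alpha, \beta \in L$ one has $(-1)^{\langle\alpha,\alpha\rangle\langle\beta,\beta\rangle + \langle\alpha,\beta\rangle} = C(\alpha,\beta)\cdot\prod_{0<j<k/2}(-\eta^{j})^{\langle\nu^{k-j}\alpha,\beta\rangle - \langle\nu^{k-j}\beta,\alpha\rangle}$, where the product runs over integers $j$ with $0 < j < k/2$ (and $\nu^{k-j} = \nu^{-j}$). -/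
/-!
Put `m j = ⟨ν^j α, β⟩` and `g j = (-η^j)^(m j)`, so that `C α β = (-1)^(⟨α,α⟩⟨β,β⟩) ∏_{j<k} g j`.
Since `⟨ν^(k-j) β, α⟩ = m j` and `-η^j = (-η^(k-j))⁻¹`, the factor of index `0 < j < k/2` in the
product is `(g j * g (k-j))⁻¹`, which cancels the pair `{j, k-j}` in `C α β`. What survives is
`g 0 = (-1)^⟨α,β⟩` and, for even `k`, `g (k/2) = 1` because `η^(k/2) = -1`.
-/

open Finset

theorem zpow_sum₀ {G ι : Type*} [CommGroupWithZero G] {a : G} (ha : a ≠ 0) (s : Finset ι)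
    (f : ι → ℤ) : a ^ (∑ i ∈ s, f i) = ∏ i ∈ s, a ^ f i := by
  classical
  induction s using Finset.induction_on with
  | empty => simp
  | insert i s hi ih => rw [sum_insert hi, prod_insert hi, zpow_add₀ ha, ih]

theorem prod_range_eq_mul_prod_middle_mul_prod_pairs {M : Type*} [CommMonoid M] (f : ℕ → M)
    {k : ℕ} (hk : 0 < k) :
    ∏ j ∈ range k, f j =
      f 0 * (∏ j ∈ (range k).filter (fun j => 2 * j = k), f j) *
        ∏ j ∈ (range k).filter (fun j => 0 < j ∧ 2 * j < k), f j * f (k - j) := by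
  set lo := (range k).filter (fun j => 0 < j ∧ 2 * j < k)
  set mid := (range k).filter (fun j => 2 * j = k)
  set hi := (range k).filter (fun j => k < 2 * j)
  have hreflect : ∏ j ∈ lo, f (k - j) = ∏ j ∈ hi, f j :=
    prod_nbij' (k - ·) (k - ·) (by simp [lo, hi]; omega) (by simp [lo, hi]; omega)
      (by simp [lo]; omega) (by simp [hi]; omega) (fun _ _ => rfl)
  have hsplit : range k = insert 0 (lo ∪ (mid ∪ hi)) := by
    ext j; simp [lo, mid, hi]; omega
  have hmid_hi : Disjoint mid hi := disjoint_filter.2 fun _ _ _ => by omega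
  have hlo_rest : Disjoint lo (mid ∪ hi) :=
    disjoint_union_right.2 ⟨disjoint_filter.2 fun _ _ _ => by omega,
      disjoint_filter.2 fun _ _ _ => by omega⟩
  rw [prod_mul_distrib, hreflect, hsplit, prod_insert (by simp [lo, mid, hi]; omega),
    prod_union hlo_rest, prod_union hmid_hi]
  ac_rfl

namespace IsPrimitiveRoot

variable {F : Type*} [Field F] {η : F} {k : ℕ}

theorem pow_eq_neg_one_of_two_mul_eq (hη : IsPrimitiveRoot η k) {j : ℕ} (hj : 0 < j)
    (hjk : 2 * j = k) : η ^ j = -1 := by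
  have h := hη.pow_of_dvd hj.ne' ⟨2, by omega⟩
  rw [← hjk, Nat.mul_div_cancel _ hj] at h
  exact h.eq_neg_one_of_two_right

theorem neg_one_zpow_add_eq_mul_prod (hη : IsPrimitiveRoot η k) (hk : 0 < k) (c : ℤ)
    (m : ℕ → ℤ) :
    (-1 : F) ^ (c + m 0) =
      (-1 : F) ^ (c + ∑ j ∈ range k, m j) * η ^ (∑ j ∈ range k, (j : ℤ) * m j) *
        ∏ j ∈ (range k).filter (fun j => 0 < j ∧ 2 * j < k), (-(η ^ j)) ^ (m (k - j) - m j) := by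
  have hη0 : η ≠ 0 := hη.ne_zero hk.ne'
  have hbase : ∀ j, -(η ^ j) ≠ 0 := fun j => neg_ne_zero.2 (pow_ne_zero j hη0)
  set g : ℕ → F := fun j => (-(η ^ j)) ^ m j
  have hg : ∀ j, g j ≠ 0 := fun j => zpow_ne_zero _ (hbase j)
  have hprod : (-1 : F) ^ (∑ j ∈ range k, m j) * η ^ (∑ j ∈ range k, (j : ℤ) * m j) =
      ∏ j ∈ range k, g j := by
    rw [zpow_sum₀ (by norm_num), zpow_sum₀ hη0, ← prod_mul_distrib]
    refine prod_congr rfl fun j _ => ?_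
    rw [zpow_mul, zpow_natCast, ← mul_zpow, ← neg_eq_neg_one_mul]
  have hpair : ∀ j ∈ (range k).filter (fun j => 0 < j ∧ 2 * j < k),
      (-(η ^ j)) ^ (m (k - j) - m j) = (g j * g (k - j))⁻¹ := by
    intro j hj
    have hjk : j ≤ k := by simp only [mem_filter, mem_range] at hj; omega
    have hinv : -(η ^ j) = (-(η ^ (k - j)))⁻¹ :=
      eq_inv_of_mul_eq_one_left <| by
        rw [neg_mul_neg, ← pow_add, Nat.add_sub_cancel' hjk, hη.pow_eq_one]
    have hreflect : (-(η ^ j)) ^ m (k - j) = (g (k - j))⁻¹ := by rw [hinv, inv_zpow]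
    rw [zpow_sub₀ (hbase j), hreflect, div_eq_mul_inv, ← mul_inv, mul_comm]
  have hmid : ∀ j ∈ (range k).filter (fun j => 2 * j = k), g j = 1 := by
    intro j hj
    simp only [mem_filter, mem_range] at hj
    simp [g, hη.pow_eq_neg_one_of_two_mul_eq (by omega) hj.2]
  rw [zpow_add₀ (by norm_num), zpow_add₀ (by norm_num), mul_assoc ((-1 : F) ^ c), hprod,
    prod_congr rfl hpair, prod_inv_distrib, prod_range_eq_mul_prod_middle_mul_prod_pairs g hk,
    prod_eq_one hmid, mul_one, ← mul_assoc ((-1 : F) ^ c),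
    mul_inv_cancel_right₀ (prod_ne_zero_iff.2 fun j _ => mul_ne_zero (hg j) (hg (k - j)))]
  simp [g]

end IsPrimitiveRoot

section Isometry

variable {R M N : Type*} [CommSemiring R] [AddCommMonoid M] [Module R M] [AddCommMonoid N]
  [Module R N] {B : M →ₗ[R] M →ₗ[R] N} {ν : M ≃ₗ[R] M}

theorem apply_pow_apply_pow_of_isometry (hiso : ∀ a b, B (ν a) (ν b) = B a b) (n : ℕ)
    (a b : M) : B ((ν ^ n) a) ((ν ^ n) b) = B a b := by
  induction n generalizing a b with
  | zero => rfl
  | succ n ih => rw [pow_succ, LinearEquiv.mul_apply, LinearEquiv.mul_apply, ih, hiso]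

theorem apply_pow_sub_apply_of_isometry (hsymm : ∀ a b, B a b = B b a)
    (hiso : ∀ a b, B (ν a) (ν b) = B a b) {k j : ℕ} (hper : ν ^ k = 1) (hj : j ≤ k) (a b : M) :
    B ((ν ^ (k - j)) b) a = B ((ν ^ j) a) b :=
  calc B ((ν ^ (k - j)) b) a = B ((ν ^ j) ((ν ^ (k - j)) b)) ((ν ^ j) a) :=
        (apply_pow_apply_pow_of_isometry hiso j _ _).symm
    _ = B b ((ν ^ j) a) := by
        rw [← LinearEquiv.mul_apply, ← pow_add, Nat.add_sub_cancel' hj, hper]; rfl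
    _ = B ((ν ^ j) a) b := hsymm _ _

end Isometry

theorem stmt_16_general (L : Type*) [AddCommGroup L] [Module ℤ L]
    (B : L →ₗ[ℤ] L →ₗ[ℤ] ℤ) (hsymm : ∀ a b : L, B a b = B b a)
    (k : ℕ) (hk : 0 < k)
    (ν : L ≃ₗ[ℤ] L) (hiso : ∀ a b : L, B (ν a) (ν b) = B a b)
    (hper : ν ^ k = 1)
    (η : ℂ) (hη : IsPrimitiveRoot η k)
    (C : L → L → ℂ)
    (hC : ∀ a b : L, C a b =
      (-1 : ℂ) ^ (B a a * B b b + ∑ j ∈ Finset.range k, B ((ν ^ j) a) b) *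
        η ^ (∑ j ∈ Finset.range k, (j : ℤ) * B ((ν ^ j) a) b))
    (α β : L) :
    (-1 : ℂ) ^ (B α α * B β β + B α β) =
      C α β *
        ∏ j ∈ (Finset.range k).filter (fun j => 0 < j ∧ 2 * j < k),
          (-(η ^ j)) ^ (B ((ν ^ (k - j)) α) β - B ((ν ^ (k - j)) β) α) := by
  have hswap : ∀ j ∈ (range k).filter (fun j => 0 < j ∧ 2 * j < k),
      B ((ν ^ (k - j)) β) α = B ((ν ^ j) α) β := fun j hj =>
    apply_pow_sub_apply_of_isometry hsymm hiso hper
      (by simp only [mem_filter, mem_range] at hj; omega) α β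
  rw [prod_congr rfl fun j hj => by rw [hswap j hj], hC]
  exact hη.neg_one_zpow_add_eq_mul_prod hk (B α α * B β β) fun j => B ((ν ^ j) α) β

theorem stmt_16 (L : Type*) [AddCommGroup L] [Module ℤ L]
    [Module.Free ℤ L] [Module.Finite ℤ L]
    (B : L →ₗ[ℤ] L →ₗ[ℤ] ℤ) (hsymm : ∀ a b : L, B a b = B b a)
    (k : ℕ) (hk : 0 < k)
    (ν : L ≃ₗ[ℤ] L) (hiso : ∀ a b : L, B (ν a) (ν b) = B a b)
    (hper : ν ^ k = 1)
    (η : ℂ) (hη : IsPrimitiveRoot η k)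
    (C : L → L → ℂ)
    (hC : ∀ a b : L, C a b =
      (-1 : ℂ) ^ (B a a * B b b + ∑ j ∈ Finset.range k, B ((ν ^ j) a) b) *
        η ^ (∑ j ∈ Finset.range k, (j : ℤ) * B ((ν ^ j) a) b))
    (α β : L) :
    (-1 : ℂ) ^ (B α α * B β β + B α β) =
      C α β *
        ∏ j ∈ (Finset.range k).filter (fun j => 0 < j ∧ 2 * j < k),
          (-(η ^ j)) ^ (B ((ν ^ (k - j)) α) β - B ((ν ^ (k - j)) β) α) :=
  stmt_16_general L B hsymm k hk ν hiso hper η hη C hC α β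
end

section
/- For every complex number $x$ with $|x| < 1$, the infinite products $\prod_{n=1}^{\infty}(1+x^{2n-1})$, $\prod_{n=1}^{\infty}(1-x^{n})$, $\prod_{n=1}^{\infty}(1-x^{2n})$, and $\prod_{n=1}^{\infty}(1-x^{4n})$ converge (the corresponding families are multipliable), and $\Big(\prod_{n=1}^{\infty}(1+x^{2n-1})\Big)\Big(\prod_{n=1}^{\infty}(1-x^{n})\Big)\Big(\prod_{n=1}^{\infty}(1-x^{4n})\Big) = \Big(\prod_{n=1}^{\infty}(1-x^{2n})\Big)^{2}$. -/
/-!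
Split `∏ (1 - x^n)` into its odd and even factors. Since
`(1 + x^(2n+1)) (1 - x^(2n+1)) = 1 - x^(4n+2)`, multiplying the odd factors by
`∏ (1 + x^(2n+1))` gives `∏ (1 - x^(4n+2))`, and together with `∏ (1 - x^(4n+4))` these
are exactly the odd and even factors of `∏ (1 - x^(2n+2))`.
-/

section

variable {R : Type*} [NormedCommRing R] [NormOneClass R] {x : R}

lemma summable_norm_pow_mul_add (hx : ‖x‖ < 1) {a : ℕ} (ha : 0 < a) (b : ℕ) :
    Summable fun n : ℕ => ‖x ^ (a * n + b)‖ := by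
  have hinj : Function.Injective fun n : ℕ => a * n + b := fun m n h => by
    simpa [ha.ne'] using h
  exact .of_nonneg_of_le (fun _ => norm_nonneg _) (fun _ => norm_pow_le _ _)
    ((summable_geometric_of_lt_one (norm_nonneg x) hx).comp_injective hinj)

variable [CompleteSpace R]

lemma multipliable_one_add_pow_mul_add (hx : ‖x‖ < 1) {a : ℕ} (ha : 0 < a) (b : ℕ) :
    Multipliable fun n : ℕ => 1 + x ^ (a * n + b) :=
  multipliable_one_add_of_summable (summable_norm_pow_mul_add hx ha b)

lemma multipliable_one_sub_pow_mul_add (hx : ‖x‖ < 1) {a : ℕ} (ha : 0 < a) (b : ℕ) :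
    Multipliable fun n : ℕ => 1 - x ^ (a * n + b) := by
  have hsum : Summable fun n : ℕ => ‖-x ^ (a * n + b)‖ := by
    simpa only [norm_neg] using summable_norm_pow_mul_add hx ha b
  simpa only [sub_eq_add_neg] using multipliable_one_add_of_summable hsum

lemma tprod_one_sub_pow_even_mul_odd (hx : ‖x‖ < 1) {a : ℕ} (ha : 0 < a) (b : ℕ) :
    (∏' n : ℕ, (1 - x ^ (2 * a * n + b))) * ∏' n : ℕ, (1 - x ^ (2 * a * n + (a + b))) =
      ∏' n : ℕ, (1 - x ^ (a * n + b)) := by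
  have h2a : 0 < 2 * a := by omega
  have heven (n : ℕ) : a * (2 * n) + b = 2 * a * n + b := by ring
  have hodd (n : ℕ) : a * (2 * n + 1) + b = 2 * a * n + (a + b) := by ring
  convert tprod_even_mul_odd (f := fun n : ℕ => 1 - x ^ (a * n + b)) ?_ ?_ using 1 <;>
    simp only [heven, hodd]
  · exact multipliable_one_sub_pow_mul_add hx h2a b
  · exact multipliable_one_sub_pow_mul_add hx h2a (a + b)

lemma tprod_one_add_pow_mul_tprod_one_sub_pow (hx : ‖x‖ < 1) {a : ℕ} (ha : 0 < a) (b : ℕ) :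
    (∏' n : ℕ, (1 + x ^ (a * n + b))) * ∏' n : ℕ, (1 - x ^ (a * n + b)) =
      ∏' n : ℕ, (1 - x ^ (2 * a * n + 2 * b)) := by
  rw [← (multipliable_one_add_pow_mul_add hx ha b).tprod_mul
    (multipliable_one_sub_pow_mul_add hx ha b)]
  congr! 2 with n
  ring

end

theorem stmt_19 (x : ℂ) (hx : ‖x‖ < 1) :
    Multipliable (fun n : ℕ => 1 + x ^ (2 * n + 1)) ∧
    Multipliable (fun n : ℕ => 1 - x ^ (n + 1)) ∧
    Multipliable (fun n : ℕ => 1 - x ^ (2 * n + 2)) ∧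
    Multipliable (fun n : ℕ => 1 - x ^ (4 * n + 4)) ∧
    (∏' n : ℕ, (1 + x ^ (2 * n + 1))) * (∏' n : ℕ, (1 - x ^ (n + 1))) *
        (∏' n : ℕ, (1 - x ^ (4 * n + 4))) =
      (∏' n : ℕ, (1 - x ^ (2 * n + 2))) ^ 2 := by
  have hconj := tprod_one_add_pow_mul_tprod_one_sub_pow hx two_pos 1
  have hsplit₁ := tprod_one_sub_pow_even_mul_odd hx one_pos 1
  have hsplit₂ := tprod_one_sub_pow_even_mul_odd hx two_pos 2
  norm_num at hconj hsplit₁ hsplit₂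
  refine ⟨multipliable_one_add_pow_mul_add hx two_pos 1,
    by simpa using multipliable_one_sub_pow_mul_add hx one_pos 1,
    multipliable_one_sub_pow_mul_add hx two_pos 2,
    multipliable_one_sub_pow_mul_add hx four_pos 4, ?_⟩
  rw [← hsplit₁, ← hsplit₂, ← hconj]
  ring
end
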